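/- Let Z₄¹ be the 4-dimensional complex Zinbiel algebra with basis (e₁, e₂, e₃, e₄) and nonzero products e₁·e₁ = e₂, e₁·e₂ = e₃, e₂·e₁ = 2e₃, e₁·e₃ = e₄, e₂·e₂ = 3e₄, e₃·e₁ = 3e₄ (all other products of basis elements zero). A linear map d : Z₄¹ → Z₄¹ is a derivation if and only if there exist α, β, γ, δ ∈ ℂ with d(e₁) = α e₁ + β e₂ + γ e₃ + δ e₄, d(e₂) = 2α e₂ + 3β e₃ + 4γ e₄, d(e₃) = 3α e₃ + 6β e₄, and d(e₄) = 4α e₄. In particular, Der(Z₄¹) is 4-dimensional. -/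

import Mathlib

/-!
Since `e₂ = e₁e₁`, `e₃ = e₁e₂` and `e₄ = e₁e₃`, the element `e₁` generates `Z₄¹`, so by the
Leibniz rule a derivation is determined by `d e₁`. Conversely every vector is `d e₁` for the
explicit derivation `derivZ41 v`, so `v ↦ derivZ41 v` is a linear isomorphism from `ℂ⁴` onto
`Der(Z₄¹)`.
-/

/-- The multiplication of the 4-dimensional complex Zinbiel algebra `Z₄¹`:
`e₁e₁ = e₂`, `e₁e₂ = e₃`, `e₂e₁ = 2e₃`, `e₁e₃ = e₄`, `e₂e₂ = 3e₄`, `e₃e₁ = 3e₄`,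
all other products of basis elements zero. -/
def mulZ41 (p q : Fin 4 → ℂ) : Fin 4 → ℂ :=
  ![0, p 0 * q 0, p 0 * q 1 + 2 * (p 1 * q 0),
    p 0 * q 2 + 3 * (p 1 * q 1) + 3 * (p 2 * q 0)]

section
variable {R M : Type*} [CommSemiring R] [AddCommMonoid M] [Module R M]

def derivations (m : M →ₗ[R] M →ₗ[R] M) : Submodule R (Module.End R M) where
  carrier := {d | ∀ p q, d (m p q) = m (d p) q + m p (d q)}
  zero_mem' := by simp
  add_mem' {d d'} hd hd' p q := by
    simp only [LinearMap.add_apply, hd p q, hd' p q, map_add]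
    abel
  smul_mem' c d hd p q := by simp [hd p q]

lemma apply_mul_eq_of_mem_derivations {m : M →ₗ[R] M →ₗ[R] M} {d d' : Module.End R M}
    (hd : d ∈ derivations m) (hd' : d' ∈ derivations m) {x y : M}
    (hx : d x = d' x) (hy : d y = d' y) : d (m x y) = d' (m x y) := by
  rw [hd x y, hd' x y, hx, hy]

lemma LinearMap.ext_fin_four {f g : (Fin 4 → R) →ₗ[R] M}
    (h₀ : f ![1, 0, 0, 0] = g ![1, 0, 0, 0]) (h₁ : f ![0, 1, 0, 0] = g ![0, 1, 0, 0])
    (h₂ : f ![0, 0, 1, 0] = g ![0, 0, 1, 0]) (h₃ : f ![0, 0, 0, 1] = g ![0, 0, 0, 1]) :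
    f = g := by
  refine (Pi.basisFun R (Fin 4)).ext fun i => ?_
  fin_cases i <;> [convert h₀ using 2; convert h₁ using 2; convert h₂ using 2;
    convert h₃ using 2] <;> (ext j; fin_cases j <;> simp)

end

def mulZ41Bilin : (Fin 4 → ℂ) →ₗ[ℂ] (Fin 4 → ℂ) →ₗ[ℂ] Fin 4 → ℂ :=
  LinearMap.mk₂ ℂ mulZ41
    (fun _ _ _ => by ext i; fin_cases i <;> simp [mulZ41] <;> ring)
    (fun _ _ _ => by ext i; fin_cases i <;> simp [mulZ41] <;> ring)
    (fun _ _ _ => by ext i; fin_cases i <;> simp [mulZ41] <;> ring)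
    (fun _ _ _ => by ext i; fin_cases i <;> simp [mulZ41] <;> ring)

/-- The derivation with `d e₁ = v`: its columns are the values on `e₂, e₃, e₄` forced by the
Leibniz rule. -/
def derivZ41 : (Fin 4 → ℂ) →ₗ[ℂ] Module.End ℂ (Fin 4 → ℂ) :=
  LinearMap.mk₂ ℂ
    (fun v p => ![v 0 * p 0, v 1 * p 0 + 2 * v 0 * p 1,
      v 2 * p 0 + 3 * v 1 * p 1 + 3 * v 0 * p 2,
      v 3 * p 0 + 4 * v 2 * p 1 + 6 * v 1 * p 2 + 4 * v 0 * p 3])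
    (fun _ _ _ => by ext i; fin_cases i <;> simp <;> ring)
    (fun _ _ _ => by ext i; fin_cases i <;> simp <;> ring)
    (fun _ _ _ => by ext i; fin_cases i <;> simp <;> ring)
    (fun _ _ _ => by ext i; fin_cases i <;> simp <;> ring)

lemma derivZ41_apply_e₁ (v : Fin 4 → ℂ) : derivZ41 v ![1, 0, 0, 0] = v := by
  ext i; fin_cases i <;> simp [derivZ41]

lemma derivZ41_mem_derivations (v : Fin 4 → ℂ) : derivZ41 v ∈ derivations mulZ41Bilin := by
  intro p q
  ext i; fin_cases i <;> simp [derivZ41, mulZ41Bilin, mulZ41] <;> ring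

lemma eq_derivZ41_of_mem_derivations {d : Module.End ℂ (Fin 4 → ℂ)}
    (hd : d ∈ derivations mulZ41Bilin) : d = derivZ41 (d ![1, 0, 0, 0]) := by
  set D := derivZ41 (d ![1, 0, 0, 0])
  have hD : D ∈ derivations mulZ41Bilin := derivZ41_mem_derivations _
  have h₀ : d ![1, 0, 0, 0] = D ![1, 0, 0, 0] := (derivZ41_apply_e₁ _).symm
  have h₁ : d ![0, 1, 0, 0] = D ![0, 1, 0, 0] := by
    simpa [mulZ41Bilin, mulZ41] using apply_mul_eq_of_mem_derivations hd hD h₀ h₀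
  have h₂ : d ![0, 0, 1, 0] = D ![0, 0, 1, 0] := by
    simpa [mulZ41Bilin, mulZ41] using apply_mul_eq_of_mem_derivations hd hD h₀ h₁
  have h₃ : d ![0, 0, 0, 1] = D ![0, 0, 0, 1] := by
    simpa [mulZ41Bilin, mulZ41] using apply_mul_eq_of_mem_derivations hd hD h₀ h₂
  exact LinearMap.ext_fin_four h₀ h₁ h₂ h₃

lemma derivations_mulZ41_eq_range : derivations mulZ41Bilin = LinearMap.range derivZ41 := by
  ext d
  refine ⟨fun hd => ⟨_, (eq_derivZ41_of_mem_derivations hd).symm⟩, ?_⟩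
  rintro ⟨v, rfl⟩
  exact derivZ41_mem_derivations v

lemma derivZ41_injective : Function.Injective derivZ41 := fun v w h => by
  rw [← derivZ41_apply_e₁ v, ← derivZ41_apply_e₁ w, h]

lemma derivZ41_eq_iff (α β γ δ : ℂ) (d : Module.End ℂ (Fin 4 → ℂ)) :
    derivZ41 ![α, β, γ, δ] = d ↔
      d ![1, 0, 0, 0] =
          α • ![1, 0, 0, 0] + β • ![0, 1, 0, 0] + γ • ![0, 0, 1, 0] + δ • ![0, 0, 0, 1] ∧
        d ![0, 1, 0, 0] =
          (2 * α) • ![0, 1, 0, 0] + (3 * β) • ![0, 0, 1, 0] + (4 * γ) • ![0, 0, 0, 1] ∧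
        d ![0, 0, 1, 0] = (3 * α) • ![0, 0, 1, 0] + (6 * β) • ![0, 0, 0, 1] ∧
        d ![0, 0, 0, 1] = (4 * α) • ![0, 0, 0, 1] := by
  constructor
  · rintro rfl
    refine ⟨?_, ?_, ?_, ?_⟩ <;> (ext i; fin_cases i <;> simp [derivZ41])
  · rintro ⟨h₀, h₁, h₂, h₃⟩
    refine LinearMap.ext_fin_four ?_ ?_ ?_ ?_ <;>
      [rw [h₀]; rw [h₁]; rw [h₂]; rw [h₃]] <;> (ext i; fin_cases i <;> simp [derivZ41])

/-- A linear map `d` on `Z₄¹` is a derivation iff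
`d(e₁) = α e₁ + β e₂ + γ e₃ + δ e₄`, `d(e₂) = 2α e₂ + 3β e₃ + 4γ e₄`,
`d(e₃) = 3α e₃ + 6β e₄`, `d(e₄) = 4α e₄` for some `α, β, γ, δ ∈ ℂ`;
in particular `Der(Z₄¹)` is 4-dimensional. -/
theorem derivations_Z41 :
    (∀ d : Module.End ℂ (Fin 4 → ℂ),
      (∀ p q : Fin 4 → ℂ, d (mulZ41 p q) = mulZ41 (d p) q + mulZ41 p (d q)) ↔
      ∃ α β γ δ : ℂ,
        d ![1, 0, 0, 0] =
          α • ![1, 0, 0, 0] + β • ![0, 1, 0, 0] + γ • ![0, 0, 1, 0] + δ • ![0, 0, 0, 1] ∧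
        d ![0, 1, 0, 0] =
          (2 * α) • ![0, 1, 0, 0] + (3 * β) • ![0, 0, 1, 0] + (4 * γ) • ![0, 0, 0, 1] ∧
        d ![0, 0, 1, 0] = (3 * α) • ![0, 0, 1, 0] + (6 * β) • ![0, 0, 0, 1] ∧
        d ![0, 0, 0, 1] = (4 * α) • ![0, 0, 0, 1]) ∧
    ∃ S : Submodule ℂ (Module.End ℂ (Fin 4 → ℂ)),
      (∀ d, d ∈ S ↔ ∀ p q : Fin 4 → ℂ, d (mulZ41 p q) = mulZ41 (d p) q + mulZ41 p (d q)) ∧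
      Module.finrank ℂ S = 4 := by
  refine ⟨fun d => ?_, derivations mulZ41Bilin, fun d => Iff.rfl, ?_⟩
  · change d ∈ derivations mulZ41Bilin ↔ _
    simp only [derivations_mulZ41_eq_range, LinearMap.mem_range, Fin.exists_fin_succ_pi,
      Fin.exists_fin_zero_pi]
    exact exists₄_congr fun α β γ δ => derivZ41_eq_iff α β γ δ d
  · rw [derivations_mulZ41_eq_range, LinearMap.finrank_range_of_inj derivZ41_injective]
    simp
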